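/- Let G be a finite simple graph with n vertices and m ≥ 1 edges, let T ≥ 1, let ω ≥ 0, and let 𝒢 be the temporal graph with lifetime T whose every snapshot equals G. Then q*_ω(𝒢) = (ω·n·(T−1) + 2·T·m·q*(G)) / (ω·n·(T−1) + 2·T·m). -/

import Mathlib

open Finset
open scoped Classical

namespace TemporalModularity

noncomputable section

variable {V : Type*} [Fintype V] {P : Type*}

/-- Twice the number of edges of `G` with both endpoints in `A`
(the sum over ordered pairs of vertices of `A` of the adjacency indicator). -/
def twoE (G : SimpleGraph V) (A : Finset V) : ℝ :=
  ∑ u ∈ A, ∑ v ∈ A, if G.Adj u v then (1 : ℝ) else 0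

/-- The degree of `v` in `G`, as a real number. -/
def deg (G : SimpleGraph V) (v : V) : ℝ :=
  ∑ u : V, if G.Adj v u then (1 : ℝ) else 0

/-- The number of edges of `G` (half the sum of the degrees), as a real number. -/
def numEdges (G : SimpleGraph V) : ℝ := (∑ v : V, deg G v) / 2

/-- The volume of `A` in `G`: the sum of the degrees of the vertices of `A`. -/
def vol (G : SimpleGraph V) (A : Finset V) : ℝ := ∑ v ∈ A, deg G v

/-- The part with label `p` of the vertex partition induced by the labelling `π`. -/
def part (π : V → P) (p : P) : Finset V := univ.filter fun v => π v = p

/-- `Σ_{A ∈ 𝒜} (2 e_G(A) − vol_G(A)² / (2m))`, where `𝒜` is the partition of the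
vertices induced by the labelling `π` (empty parts contribute zero). -/
def snapTerm (G : SimpleGraph V) (π : V → P) : ℝ :=
  ∑ p ∈ univ.image π,
    (twoE G (part π p) - vol G (part π p) ^ 2 / (2 * numEdges G))

/-- The static modularity `q(G,𝒜) = Σ_{A ∈ 𝒜} (e(A)/m − vol(A)²/(4m²))` of the
partition induced by the labelling `π`. -/
def staticQ (G : SimpleGraph V) (π : V → P) : ℝ :=
  ∑ p ∈ univ.image π,
    (twoE G (part π p) / (2 * numEdges G) -
      vol G (part π p) ^ 2 / (4 * numEdges G ^ 2))

/-- The maximum static modularity `q*(G)` over all vertex partitions (every partition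
of `V` is induced by some labelling `V → V`). -/
def staticQStar (G : SimpleGraph V) : ℝ := ⨆ π : V → V, staticQ G π

/-- The loyalty contribution `L(𝒜)` of the temporal partition `π` with lifetime `T`. -/
def loyalty (T : ℕ) (π : V → ℕ → P) : ℝ :=
  ∑ v : V, ∑ t ∈ Icc 1 (T - 1), if π v t = π v (t + 1) then (1 : ℝ) else 0

/-- The per-time loyalty `L(𝒜,t)` of the temporal partition `π`. -/
def loyaltyAt (π : V → ℕ → P) (t : ℕ) : ℝ :=
  ∑ v : V, if π v t = π v (t + 1) then (1 : ℝ) else 0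

/-- The normalisation factor `μ_ω(𝒢) = ω n (T−1)/2 + Σ_t m_t`. -/
def mu (G : ℕ → SimpleGraph V) (T : ℕ) (ω : ℝ) : ℝ :=
  ω * (Fintype.card V) * ((T : ℝ) - 1) / 2 + ∑ t ∈ Icc 1 T, numEdges (G t)

/-- The non-normalised temporal modularity of the restriction of the temporal graph
`G` to the time interval `[a,b]`, for the partition `π`. -/
def qTildeI (G : ℕ → SimpleGraph V) (a b : ℕ) (ω : ℝ) (π : V → ℕ → P) : ℝ :=
  (∑ t ∈ Icc a b, snapTerm (G t) fun v => π v t) +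
    ω * ∑ v : V, ∑ t ∈ Icc a (b - 1), if π v t = π v (t + 1) then (1 : ℝ) else 0

/-- The non-normalised temporal modularity `q̃_ω(𝒢,𝒜)` of the partition `π` of the
temporal graph `G` with lifetime `T`. -/
def qTilde (G : ℕ → SimpleGraph V) (T : ℕ) (ω : ℝ) (π : V → ℕ → P) : ℝ :=
  qTildeI G 1 T ω π

/-- The temporal modularity `q_ω(𝒢,𝒜)` of the partition `π` of the temporal graph `G`
with lifetime `T`. -/
def qTemp (G : ℕ → SimpleGraph V) (T : ℕ) (ω : ℝ) (π : V → ℕ → P) : ℝ :=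
  qTilde G T ω π / (2 * mu G T ω)

/-- The temporal modularity `q*_ω(𝒢)`: the maximum of `q_ω(𝒢,𝒜)` over all partitions
(every partition of `V × [T]` is induced by some labelling into `ℕ`). -/
def qTempStar (G : ℕ → SimpleGraph V) (T : ℕ) (ω : ℝ) : ℝ :=
  ⨆ π : V → ℕ → ℕ, qTemp G T ω π

/-- The temporal `k`-modularity `q*_{k,ω}(𝒢)`: the maximum of `q_ω(𝒢,𝒜)` over all
partitions into at most `k` parts. -/
def qTempStarK (G : ℕ → SimpleGraph V) (T : ℕ) (ω : ℝ) (k : ℕ) : ℝ :=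
  ⨆ π : V → ℕ → Fin k, qTemp G T ω π

/-- The maximum non-normalised temporal modularity of the restriction of `G` to the
time interval `[a,b]`, over all partitions. -/
def qTildeStarI (G : ℕ → SimpleGraph V) (a b : ℕ) (ω : ℝ) : ℝ :=
  ⨆ π : V → ℕ → ℕ, qTildeI G a b ω π

/-- The non-normalised temporal modularity `q̃*_ω(𝒢)` of the temporal graph `G` with
lifetime `T`. -/
def qTildeStar (G : ℕ → SimpleGraph V) (T : ℕ) (ω : ℝ) : ℝ := qTildeStarI G 1 T ω

/-- The maximum non-normalised temporal modularity of the restriction of `G` to `[a,b]`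
over partitions into at most `c` parts. -/
def qTildeStarKI (G : ℕ → SimpleGraph V) (a b : ℕ) (ω : ℝ) (c : ℕ) : ℝ :=
  ⨆ π : V → ℕ → Fin c, qTildeI G a b ω π

/-- The non-normalised temporal `c`-modularity `q̃*_{c,ω}(𝒢)`. -/
def qTildeStarK (G : ℕ → SimpleGraph V) (T : ℕ) (ω : ℝ) (c : ℕ) : ℝ :=
  qTildeStarKI G 1 T ω c

end

/-!
When every snapshot is `G`, each snapshot term of `q̃_ω` equals `2m·q(G, 𝒜_t) ≤ 2m·q*(G)` and
the loyalty is at most `n(T−1)`. Freezing an optimal static partition through time attains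
both bounds at once, and `2μ_ω = ωn(T−1) + 2Tm`.
-/

section Modularity

variable {V : Type*} [Fintype V] {P Q : Type*}

lemma sum_image_part_comp (σ : V → P) {f : P → Q} (hf : Set.InjOn f (Set.range σ))
    (F : Finset V → ℝ) :
    ∑ q ∈ univ.image (f ∘ σ), F (part (f ∘ σ) q) = ∑ p ∈ univ.image σ, F (part σ p) := by
  have hf' : Set.InjOn f ↑(univ.image σ) := by simpa using hf
  rw [← image_image, sum_image hf']
  refine sum_congr rfl fun p hp => congrArg F ?_
  ext v
  simp only [part, mem_filter, mem_univ, true_and, Function.comp_apply]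
  exact ⟨fun h => hf (Set.mem_range_self v) (by simpa using hp) h, fun h => h ▸ rfl⟩

lemma staticQ_comp (G : SimpleGraph V) (σ : V → P) {f : P → Q}
    (hf : Set.InjOn f (Set.range σ)) : staticQ G (f ∘ σ) = staticQ G σ :=
  sum_image_part_comp σ hf fun A =>
    twoE G A / (2 * numEdges G) - vol G A ^ 2 / (4 * numEdges G ^ 2)

lemma snapTerm_eq_mul_staticQ (G : SimpleGraph V) (hm : numEdges G ≠ 0) (σ : V → P) :
    snapTerm G σ = 2 * numEdges G * staticQ G σ := by
  rw [snapTerm, staticQ, mul_sum]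
  refine sum_congr rfl fun p _ => ?_
  field_simp
  ring

lemma bddAbove_range_staticQ (G : SimpleGraph V) :
    BddAbove (Set.range (staticQ G : (V → V) → ℝ)) :=
  (Set.finite_range _).bddAbove

/-- Relabelling the parts by points of `V` shows that `q*(G)` bounds partitions labelled by
any type. -/
lemma staticQ_le_staticQStar (G : SimpleGraph V) [Nonempty V] (σ : V → P) :
    staticQ G σ ≤ staticQStar G := by
  have hinj : Set.InjOn (Function.invFun σ) (Set.range σ) := by
    rintro _ ⟨u, rfl⟩ _ ⟨v, rfl⟩ h
    rw [← Function.invFun_eq (f := σ) ⟨u, rfl⟩, h, Function.invFun_eq (f := σ) ⟨v, rfl⟩]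
  rw [← staticQ_comp G σ hinj]
  exact le_ciSup (bddAbove_range_staticQ G) _

lemma exists_staticQ_eq_staticQStar (G : SimpleGraph V) [Nonempty V] :
    ∃ ρ : V → V, staticQ G ρ = staticQStar G := by
  obtain ⟨ρ, hρ⟩ := Finite.exists_max (staticQ G : (V → V) → ℝ)
  exact ⟨ρ, le_antisymm (le_ciSup (bddAbove_range_staticQ G) ρ) (ciSup_le hρ)⟩

lemma deg_eq_degree (G : SimpleGraph V) (v : V) : deg G v = G.degree v := by
  rw [deg, sum_boole, ← SimpleGraph.card_neighborFinset_eq_degree,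
    SimpleGraph.neighborFinset_eq_filter]

lemma numEdges_eq_card_edgeFinset (G : SimpleGraph V) : numEdges G = #G.edgeFinset := by
  rw [numEdges]
  simp only [deg_eq_degree]
  rw [← Nat.cast_sum, G.sum_degrees_eq_twice_card_edges]
  push_cast
  ring

lemma numEdges_pos {G : SimpleGraph V} (hG : G.edgeSet.Nonempty) : 0 < numEdges G := by
  rw [numEdges_eq_card_edgeFinset, Nat.cast_pos, card_pos,
    SimpleGraph.edgeFinset_nonempty, ← SimpleGraph.edgeSet_nonempty]
  exact hG

lemma numEdges_nonneg (G : SimpleGraph V) : 0 ≤ numEdges G :=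
  numEdges_eq_card_edgeFinset G ▸ Nat.cast_nonneg _

lemma loyalty_le (T : ℕ) (π : V → ℕ → P) : loyalty T π ≤ Fintype.card V * (T - 1 : ℕ) := by
  calc loyalty T π ≤ ∑ _v : V, ∑ _t ∈ Icc 1 (T - 1), (1 : ℝ) :=
        sum_le_sum fun v _ => sum_le_sum fun t _ => by split_ifs <;> norm_num
    _ = Fintype.card V * (T - 1 : ℕ) := by simp

lemma loyalty_const (T : ℕ) (σ : V → P) :
    loyalty T (fun v (_ : ℕ) => σ v) = Fintype.card V * (T - 1 : ℕ) := by
  simp [loyalty]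

lemma qTilde_eq (G : ℕ → SimpleGraph V) (T : ℕ) (ω : ℝ) (π : V → ℕ → P) :
    qTilde G T ω π = ∑ t ∈ Icc 1 T, snapTerm (G t) (fun v => π v t) + ω * loyalty T π :=
  rfl

lemma two_mul_mu_const (G : SimpleGraph V) (T : ℕ) (ω : ℝ) :
    2 * mu (fun _ => G) T ω =
      ω * Fintype.card V * ((T : ℝ) - 1) + 2 * T * numEdges G := by
  simp only [mu, sum_const, Nat.card_Icc, Nat.add_sub_cancel, nsmul_eq_mul]
  ring

lemma qTilde_const_le (G : SimpleGraph V) [Nonempty V] (hm : numEdges G ≠ 0) (T : ℕ)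
    {ω : ℝ} (hω : 0 ≤ ω) (π : V → ℕ → P) :
    qTilde (fun _ => G) T ω π ≤
      ω * Fintype.card V * (T - 1 : ℕ) + 2 * T * numEdges G * staticQStar G := by
  have hm₀ := numEdges_nonneg G
  have hsnap : ∀ t ∈ Icc 1 T, snapTerm G (fun v => π v t) ≤ 2 * numEdges G * staticQStar G :=
    fun t _ => snapTerm_eq_mul_staticQ G hm _ ▸
      mul_le_mul_of_nonneg_left (staticQ_le_staticQStar G _) (by positivity)
  calc qTilde (fun _ => G) T ω π
      ≤ ∑ _t ∈ Icc 1 T, 2 * numEdges G * staticQStar G + ω * (Fintype.card V * (T - 1 : ℕ)) :=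
        add_le_add (sum_le_sum hsnap) (mul_le_mul_of_nonneg_left (loyalty_le T π) hω)
    _ = ω * Fintype.card V * (T - 1 : ℕ) + 2 * T * numEdges G * staticQStar G := by
        simp only [sum_const, Nat.card_Icc, Nat.add_sub_cancel, nsmul_eq_mul]
        ring

lemma qTilde_const_labelling (G : SimpleGraph V) (T : ℕ) (ω : ℝ) (σ : V → P) :
    qTilde (fun _ => G) T ω (fun v (_ : ℕ) => σ v) =
      ω * Fintype.card V * (T - 1 : ℕ) + T * snapTerm G σ := by
  rw [qTilde_eq, loyalty_const]
  simp only [sum_const, Nat.card_Icc, Nat.add_sub_cancel, nsmul_eq_mul]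
  ring

end Modularity

/-- If every snapshot of `𝒢` equals the static graph `G` with `n`
vertices and `m ≥ 1` edges, `T ≥ 1` and `ω ≥ 0`, then
`q*_ω(𝒢) = (ω n (T−1) + 2 T m q*(G)) / (ω n (T−1) + 2 T m)`. -/
theorem temporalModularity_constant_snapshots_formula {V : Type*} [Fintype V]
    (G : SimpleGraph V) (hG : G.edgeSet.Nonempty)
    (T : ℕ) (hT : 1 ≤ T) (ω : ℝ) (hω : 0 ≤ ω) :
    qTempStar (fun _ => G) T ω =
      (ω * (Fintype.card V : ℝ) * ((T : ℝ) - 1) +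
          2 * (T : ℝ) * numEdges G * staticQStar G) /
        (ω * (Fintype.card V : ℝ) * ((T : ℝ) - 1) + 2 * (T : ℝ) * numEdges G) := by
  have hm : numEdges G ≠ 0 := (numEdges_pos hG).ne'
  obtain ⟨⟨u, _⟩, -⟩ := hG
  have : Nonempty V := ⟨u⟩
  have hT₁ : ((T - 1 : ℕ) : ℝ) = T - 1 := by rw [Nat.cast_sub hT, Nat.cast_one]
  have hden : 0 ≤ 2 * mu (fun _ => G) T ω := by
    have := numEdges_nonneg G
    rw [two_mul_mu_const, ← hT₁]
    positivity
  obtain ⟨ρ, hρ⟩ := exists_staticQ_eq_staticQStar G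
  let label : V → ℕ := fun v => Fintype.equivFin V v
  have hlabel : label.Injective := Fin.val_injective.comp (Fintype.equivFin V).injective
  rw [← two_mul_mu_const]
  unfold qTempStar qTemp
  refine IsGreatest.csSup_eq ⟨⟨fun v _ => (label ∘ ρ) v, ?_⟩, ?_⟩
  · dsimp only
    rw [qTilde_const_labelling, snapTerm_eq_mul_staticQ G hm, staticQ_comp G ρ hlabel.injOn,
      hρ, hT₁]
    ring
  · rintro _ ⟨π, rfl⟩
    rw [← hT₁]
    exact div_le_div_of_nonneg_right (qTilde_const_le G hm T hω π) hden

end TemporalModularity
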